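/- Let A be a unital C*-algebra and a ∈ A. Then v(a)³ ≤ (1/2)·‖a‖³ + (1/2)·min{ v(a*a²), v(a²a*) }. Moreover, if v(a) = ‖a‖, then v(a*a²) = v(a²a*) = ‖a‖³. -/

import Mathlib

open scoped ComplexOrder

/-- A state on a unital `C*`-algebra: a positive linear functional `φ` (equivalently, since the
algebra is complete, `φ (star b * b) ≥ 0` for all `b`) with `φ 1 = 1`. -/
def IsState {A : Type*} [CStarAlgebra A] (φ : A →ₗ[ℂ] ℂ) : Prop :=
  (∀ b : A, 0 ≤ φ (star b * b)) ∧ φ 1 = 1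

/-- The numerical radius of an element of a unital `C*`-algebra:
`v(a) = sup { |φ(a)| : φ a state on A }`. -/
noncomputable def numRadius {A : Type*} [CStarAlgebra A] (a : A) : ℝ :=
  sSup {r : ℝ | ∃ φ : A →ₗ[ℂ] ℂ, IsState φ ∧ r = ‖φ a‖}

/-!
A state `φ` turns `A` into a pre-inner-product space with `⟪x, y⟫ = φ (x⋆ y)` (its GNS space), in
which `1` is a unit vector. Buzano's inequality for this unit vector, applied to `a⋆a` and `a`,
gives `2 ‖φ (a⋆a)‖ ‖φ a‖ ≤ ‖a‖³ + ‖φ (a⋆a²)‖`, and Cauchy–Schwarz gives `‖φ a‖² ≤ ‖φ (a⋆a)‖`, so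
`2 ‖φ a‖³ ≤ ‖a‖³ + v(a⋆a²)`. The same bound for `a⋆` yields the one with `a²a⋆`, and taking the
supremum over states proves the inequality. If `v(a) = ‖a‖`, it forces `v(a⋆a²), v(a²a⋆) ≥ ‖a‖³`,
while `v(b) ≤ ‖b‖` gives the reverse inequalities.
-/

open scoped InnerProductSpace

theorem two_mul_norm_inner_mul_inner_le {𝕜 E : Type*} [RCLike 𝕜] [SeminormedAddCommGroup E]
    [InnerProductSpace 𝕜 E] {e : E} (he : ‖e‖ = 1) (x y : E) :
    2 * ‖⟪x, e⟫_𝕜 * ⟪e, y⟫_𝕜‖ ≤ ‖x‖ * ‖y‖ + ‖⟪x, y⟫_𝕜‖ := by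
  set c := ⟪e, y⟫_𝕜
  -- the reflection of `y` in the line through `e`
  set r := (2 * c) • e - y
  have hr : ‖r‖ = ‖y‖ := by
    have hc : starRingEnd 𝕜 (2 * c) * c = ((2 * ‖c‖ ^ 2 : ℝ) : 𝕜) := by
      rw [map_mul, map_ofNat, mul_assoc, RCLike.conj_mul]
      push_cast
      rfl
    rw [← sq_eq_sq₀ (norm_nonneg _) (norm_nonneg _), @norm_sub_sq 𝕜, norm_smul, inner_smul_left,
      he, hc, RCLike.ofReal_re, norm_mul, RCLike.norm_two]
    ring
  have hinner : ⟪x, r⟫_𝕜 = 2 * (⟪x, e⟫_𝕜 * c) - ⟪x, y⟫_𝕜 := by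
    simp only [r, inner_sub_right, inner_smul_right]
    ring
  calc 2 * ‖⟪x, e⟫_𝕜 * c‖ = ‖⟪x, r⟫_𝕜 + ⟪x, y⟫_𝕜‖ := by
        rw [hinner, sub_add_cancel, norm_mul (2 : 𝕜), RCLike.norm_two]
    _ ≤ ‖⟪x, r⟫_𝕜‖ + ‖⟪x, y⟫_𝕜‖ := norm_add_le _ _
    _ ≤ ‖x‖ * ‖y‖ + ‖⟪x, y⟫_𝕜‖ := by
        gcongr
        exact hr ▸ norm_inner_le_norm x r

theorem Real.sSup_pow_le {S : Set ℝ} {n : ℕ} (hn : n ≠ 0) {C : ℝ} (hC : 0 ≤ C)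
    (hS : ∀ r ∈ S, 0 ≤ r ∧ r ^ n ≤ C) : sSup S ^ n ≤ C := by
  have hroot : sSup S ≤ C ^ (n⁻¹ : ℝ) := by
    refine Real.sSup_le (fun r hr => ?_) (by positivity)
    rw [← Real.pow_rpow_inv_natCast (hS r hr).1 hn]
    exact Real.rpow_le_rpow (pow_nonneg (hS r hr).1 n) (hS r hr).2 (by positivity)
  calc sSup S ^ n ≤ (C ^ (n⁻¹ : ℝ)) ^ n :=
        pow_le_pow_left₀ (Real.sSup_nonneg fun r hr => (hS r hr).1) hroot n
    _ = C := Real.rpow_inv_natCast_pow hC hn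

namespace IsState

variable {A : Type*} [CStarAlgebra A] {φ : A →ₗ[ℂ] ℂ}

section StarOrdered

variable [PartialOrder A] [StarOrderedRing A]

theorem map_nonneg (hφ : IsState φ) {x : A} (hx : 0 ≤ x) : 0 ≤ φ x := by
  rw [StarOrderedRing.nonneg_iff] at hx
  induction hx using AddSubmonoid.closure_induction with
  | mem _ h => obtain ⟨b, rfl⟩ := h; exact hφ.1 b
  | zero => simp
  | add _ _ _ _ h₁ h₂ => rw [map_add]; exact add_nonneg h₁ h₂

noncomputable def toPositiveLinearMap (hφ : IsState φ) : A →ₚ[ℂ] ℂ :=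
  .mk₀ φ fun _ => hφ.map_nonneg

theorem inner_toPreGNS (hφ : IsState φ) (x y : A) :
    ⟪hφ.toPositiveLinearMap.toPreGNS x, hφ.toPositiveLinearMap.toPreGNS y⟫_ℂ = φ (star x * y) :=
  rfl

theorem norm_toPreGNS_sq (hφ : IsState φ) (x : A) :
    ‖hφ.toPositiveLinearMap.toPreGNS x‖ ^ 2 = ‖φ (star x * x)‖ := by
  have h := congrArg norm <|
    hφ.toPositiveLinearMap.preGNS_norm_sq (hφ.toPositiveLinearMap.toPreGNS x)
  rwa [← Complex.ofReal_pow, Complex.norm_real, Real.norm_of_nonneg (by positivity)] at h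

theorem norm_toPreGNS_one (hφ : IsState φ) : ‖hφ.toPositiveLinearMap.toPreGNS 1‖ = 1 := by
  rw [← pow_eq_one_iff_of_nonneg (norm_nonneg _) two_ne_zero, norm_toPreGNS_sq, star_one, one_mul,
    hφ.2, norm_one]

theorem norm_toPreGNS_le (hφ : IsState φ) (x : A) : ‖hφ.toPositiveLinearMap.toPreGNS x‖ ≤ ‖x‖ := by
  refine (sq_le_sq₀ (norm_nonneg _) (norm_nonneg _)).mp ?_
  have h : ‖φ (star x * x)‖ ≤ ‖φ 1‖ * ‖star x * x‖ :=
    hφ.toPositiveLinearMap.norm_apply_le_of_nonneg _ (star_mul_self_nonneg x)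
  rwa [hφ.2, norm_one, one_mul, CStarRing.norm_star_mul_self, ← sq, ← norm_toPreGNS_sq hφ] at h

end StarOrdered

theorem norm_apply_sq_le (hφ : IsState φ) (x : A) : ‖φ x‖ ^ 2 ≤ ‖φ (star x * x)‖ := by
  let _ : PartialOrder A := CStarAlgebra.spectralOrder A
  have _ : StarOrderedRing A := CStarAlgebra.spectralOrderedRing A
  have h := norm_inner_le_norm (𝕜 := ℂ) (hφ.toPositiveLinearMap.toPreGNS 1)
    (hφ.toPositiveLinearMap.toPreGNS x)
  rw [inner_toPreGNS, star_one, one_mul, norm_toPreGNS_one, one_mul] at h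
  rw [← norm_toPreGNS_sq hφ]
  gcongr

theorem norm_apply_le (hφ : IsState φ) (x : A) : ‖φ x‖ ≤ ‖x‖ := by
  let _ : PartialOrder A := CStarAlgebra.spectralOrder A
  have _ : StarOrderedRing A := CStarAlgebra.spectralOrderedRing A
  calc ‖φ x‖ = ‖⟪hφ.toPositiveLinearMap.toPreGNS 1, hφ.toPositiveLinearMap.toPreGNS x⟫_ℂ‖ := by
        rw [inner_toPreGNS, star_one, one_mul]
    _ ≤ ‖x‖ := by
        refine (norm_inner_le_norm _ _).trans ?_
        rw [norm_toPreGNS_one, one_mul]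
        exact hφ.norm_toPreGNS_le x

theorem norm_apply_star (hφ : IsState φ) (x : A) : ‖φ (star x)‖ = ‖φ x‖ := by
  let _ : PartialOrder A := CStarAlgebra.spectralOrder A
  have _ : StarOrderedRing A := CStarAlgebra.spectralOrderedRing A
  simpa only [inner_toPreGNS, star_one, one_mul, mul_one] using
    norm_inner_symm (𝕜 := ℂ) (hφ.toPositiveLinearMap.toPreGNS x)
      (hφ.toPositiveLinearMap.toPreGNS 1)

theorem two_mul_norm_apply_star_mul_apply_le (hφ : IsState φ) (x y : A) :
    2 * ‖φ (star x) * φ y‖ ≤ ‖x‖ * ‖y‖ + ‖φ (star x * y)‖ := by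
  let _ : PartialOrder A := CStarAlgebra.spectralOrder A
  have _ : StarOrderedRing A := CStarAlgebra.spectralOrderedRing A
  have h := two_mul_norm_inner_mul_inner_le (𝕜 := ℂ) hφ.norm_toPreGNS_one
    (hφ.toPositiveLinearMap.toPreGNS x) (hφ.toPositiveLinearMap.toPreGNS y)
  simp only [inner_toPreGNS, star_one, one_mul, mul_one] at h
  refine h.trans ?_
  gcongr
  exacts [hφ.norm_toPreGNS_le x, hφ.norm_toPreGNS_le y]

theorem two_mul_norm_apply_pow_three_le_star_mul_sq (hφ : IsState φ) (a : A) :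
    2 * ‖φ a‖ ^ 3 ≤ ‖a‖ ^ 3 + ‖φ (star a * a ^ 2)‖ := by
  have h := hφ.two_mul_norm_apply_star_mul_apply_le (star a * a) a
  rw [star_mul, star_star, CStarRing.norm_star_mul_self, mul_assoc (star a), ← sq a, norm_mul,
    ← pow_three'] at h
  calc 2 * ‖φ a‖ ^ 3 = 2 * (‖φ a‖ ^ 2 * ‖φ a‖) := by ring
    _ ≤ 2 * (‖φ (star a * a)‖ * ‖φ a‖) := by gcongr; exact hφ.norm_apply_sq_le a
    _ ≤ ‖a‖ ^ 3 + ‖φ (star a * a ^ 2)‖ := h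

theorem two_mul_norm_apply_pow_three_le_sq_mul_star (hφ : IsState φ) (a : A) :
    2 * ‖φ a‖ ^ 3 ≤ ‖a‖ ^ 3 + ‖φ (a ^ 2 * star a)‖ := by
  have h := hφ.two_mul_norm_apply_pow_three_le_star_mul_sq (star a)
  rwa [hφ.norm_apply_star, norm_star, star_star, ← star_pow, ← star_star a, ← star_mul, star_star,
    hφ.norm_apply_star] at h

end IsState

section NumRadius

variable {A : Type*} [CStarAlgebra A]

theorem numRadius_nonneg (a : A) : 0 ≤ numRadius a :=
  Real.sSup_nonneg <| by rintro _ ⟨φ, -, rfl⟩; exact norm_nonneg _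

theorem numRadius_le_norm (a : A) : numRadius a ≤ ‖a‖ :=
  Real.sSup_le (by rintro _ ⟨φ, hφ, rfl⟩; exact hφ.norm_apply_le a) (norm_nonneg a)

theorem IsState.norm_apply_le_numRadius {φ : A →ₗ[ℂ] ℂ} (hφ : IsState φ) (a : A) :
    ‖φ a‖ ≤ numRadius a :=
  le_csSup ⟨‖a‖, by rintro _ ⟨ψ, hψ, rfl⟩; exact hψ.norm_apply_le a⟩ ⟨φ, hφ, rfl⟩

theorem numRadius_pow_le {a : A} {n : ℕ} (hn : n ≠ 0) {C : ℝ} (hC : 0 ≤ C)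
    (h : ∀ φ : A →ₗ[ℂ] ℂ, IsState φ → ‖φ a‖ ^ n ≤ C) : numRadius a ^ n ≤ C :=
  Real.sSup_pow_le hn hC <| by rintro _ ⟨φ, hφ, rfl⟩; exact ⟨norm_nonneg _, h φ hφ⟩

end NumRadius

/-- Remark 2.17:
`v(a)³ ≤ (1/2)·‖a‖³ + (1/2)·min{v(a*a²), v(a²a*)}`; moreover if `v(a) = ‖a‖` then
`v(a*a²) = v(a²a*) = ‖a‖³`. -/
theorem numRadius_cube_le_min_half
    {A : Type*} [CStarAlgebra A] (a : A) :
    numRadius a ^ 3 ≤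
        (1 / 2) * ‖a‖ ^ 3
          + (1 / 2) * min (numRadius (star a * a ^ 2)) (numRadius (a ^ 2 * star a)) ∧
      (numRadius a = ‖a‖ →
        numRadius (star a * a ^ 2) = ‖a‖ ^ 3 ∧ numRadius (a ^ 2 * star a) = ‖a‖ ^ 3) := by
  set v₁ := numRadius (star a * a ^ 2)
  set v₂ := numRadius (a ^ 2 * star a)
  have hcube : numRadius a ^ 3 ≤ (1 / 2) * ‖a‖ ^ 3 + (1 / 2) * min v₁ v₂ := by
    have hmin : 0 ≤ min v₁ v₂ := le_min (numRadius_nonneg _) (numRadius_nonneg _)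
    refine numRadius_pow_le three_ne_zero (by positivity) fun φ hφ => ?_
    have h₁ := (hφ.two_mul_norm_apply_pow_three_le_star_mul_sq a).trans
      (add_le_add le_rfl (hφ.norm_apply_le_numRadius _))
    have h₂ := (hφ.two_mul_norm_apply_pow_three_le_sq_mul_star a).trans
      (add_le_add le_rfl (hφ.norm_apply_le_numRadius _))
    have h := le_min h₁ h₂
    rw [min_add_add_left] at h
    linarith
  refine ⟨hcube, fun hnorm => ?_⟩
  have hmin : ‖a‖ ^ 3 ≤ min v₁ v₂ := by rw [hnorm] at hcube; linarith
  have h₁ : ‖star a * a ^ 2‖ ≤ ‖a‖ ^ 3 := by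
    simpa only [← pow_succ'] using norm_mul_le_of_le (norm_star a).le (norm_pow_le' a two_pos)
  have h₂ : ‖a ^ 2 * star a‖ ≤ ‖a‖ ^ 3 := by
    simpa only [← pow_succ] using norm_mul_le_of_le (norm_pow_le' a two_pos) (norm_star a).le
  exact ⟨((numRadius_le_norm _).trans h₁).antisymm (hmin.trans (min_le_left _ _)),
    ((numRadius_le_norm _).trans h₂).antisymm (hmin.trans (min_le_right _ _))⟩
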